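/- Let G be a countable discrete group. The topological conjugacy relation on the standard Borel space of compact metrizable G-ambits is Borel. -/
import Mathlib


open TopologicalSpace MeasureTheory

attribute [local instance] PiCountable.metricSpace

/-- The Hilbert cube `[0,1]^ℕ`. -/
abbrev Hcube : Type := ℕ → unitInterval

noncomputable local instance : MeasurableSpace Hcube := borel Hcube
local instance : BorelSpace Hcube := ⟨rfl⟩
noncomputable local instance : MeasurableSpace (NonemptyCompacts (Hcube × Hcube)) :=
  borel _
local instance : BorelSpace (NonemptyCompacts (Hcube × Hcube)) := ⟨rfl⟩

/-- `C ⊆ ℍ × ℍ` is the graph of a homeomorphism between compact subsets of `ℍ`. -/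
def IsHomeoGraph (C : Set (Hcube × Hcube)) : Prop :=
  ∃ K L : Set Hcube, IsCompact K ∧ IsCompact L ∧ ∃ φ : K ≃ₜ L,
    C = Set.range fun k : K => ((k : Hcube), (φ k : Hcube))

/-- Codes of compact metrizable `G`-ambits: each `λ_g` is the graph of a homeomorphism
between compact subsets of `ℍ`, common domain equals common range, `λ_1` is the identity
on its domain, `λ_g ∘ λ_h = λ_{gh}`, `α` lies in the common domain, and the orbit of `α`
is dense in the common domain. -/
def AmbitCode (G : Type) [Group G]
    (p : (G → NonemptyCompacts (Hcube × Hcube)) × Hcube) : Prop :=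
  (∀ g : G, IsHomeoGraph (p.1 g : Set (Hcube × Hcube))) ∧
  (∀ g : G, Prod.fst '' (p.1 g : Set (Hcube × Hcube)) =
    Prod.snd '' (p.1 g : Set (Hcube × Hcube))) ∧
  (∀ g h : G, Prod.fst '' (p.1 g : Set (Hcube × Hcube)) =
    Prod.fst '' (p.1 h : Set (Hcube × Hcube))) ∧
  (∀ q ∈ (p.1 1 : Set (Hcube × Hcube)), q.2 = q.1) ∧
  (∀ (g h : G) (x y z : Hcube), (x, y) ∈ (p.1 h : Set (Hcube × Hcube)) →
    (y, z) ∈ (p.1 g : Set (Hcube × Hcube)) → (x, z) ∈ (p.1 (g * h) : Set (Hcube × Hcube))) ∧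
  (p.2 ∈ Prod.fst '' (p.1 1 : Set (Hcube × Hcube))) ∧
  (∀ x ∈ Prod.fst '' (p.1 1 : Set (Hcube × Hcube)), ∀ ε : ℚ, 0 < ε →
    ∃ (g : G) (y : Hcube), (p.2, y) ∈ (p.1 g : Set (Hcube × Hcube)) ∧ dist y x < (ε : ℝ))

/-- Two ambit codes are topologically conjugate: there is a homeomorphism `F` between
the underlying compact sets with `F(α) = β` intertwining the two actions. -/
def CodeConj (G : Type) [Group G]
    (p q : (G → NonemptyCompacts (Hcube × Hcube)) × Hcube) : Prop :=
  ∃ F : Set (Hcube × Hcube), IsHomeoGraph F ∧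
    Prod.fst '' F = Prod.fst '' (p.1 1 : Set (Hcube × Hcube)) ∧
    Prod.snd '' F = Prod.fst '' (q.1 1 : Set (Hcube × Hcube)) ∧
    (p.2, q.2) ∈ F ∧
    ∀ (g : G) (x y u v : Hcube), (x, y) ∈ (p.1 g : Set (Hcube × Hcube)) →
      (x, u) ∈ F → (y, v) ∈ F → (u, v) ∈ (q.1 g : Set (Hcube × Hcube))

/-! ### Auxiliary results -/

/-- A homeomorphism graph is the graph of a function. -/
theorem IsHomeoGraph.eq_of_mem {C : Set (Hcube × Hcube)} (h : IsHomeoGraph C)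
    {x y y' : Hcube} (h1 : (x, y) ∈ C) (h2 : (x, y') ∈ C) : y = y' := by
  obtain ⟨K, L, hK, hL, φ, rfl⟩ := h
  obtain ⟨k, hk⟩ := h1
  obtain ⟨k', hk'⟩ := h2
  obtain ⟨hk1, hk2⟩ := Prod.mk.injEq .. ▸ hk
  obtain ⟨hk1', hk2'⟩ := Prod.mk.injEq .. ▸ hk'
  have : k = k' := Subtype.ext (hk1.trans hk1'.symm)
  rw [← hk2, ← hk2', this]

/-- A homeomorphism graph is the graph of an injective function. -/
theorem IsHomeoGraph.eq_of_mem' {C : Set (Hcube × Hcube)} (h : IsHomeoGraph C)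
    {x x' y : Hcube} (h1 : (x, y) ∈ C) (h2 : (x', y) ∈ C) : x = x' := by
  obtain ⟨K, L, hK, hL, φ, rfl⟩ := h
  obtain ⟨k, hk⟩ := h1
  obtain ⟨k', hk'⟩ := h2
  obtain ⟨hk1, hk2⟩ := Prod.mk.injEq .. ▸ hk
  obtain ⟨hk1', hk2'⟩ := Prod.mk.injEq .. ▸ hk'
  have h5 : φ k = φ k' := Subtype.ext (hk2.trans hk2'.symm)
  have : k = k' := φ.injective h5
  rw [← hk1, ← hk1', this]

/-- Continuity of a homeomorphism graph, sequential form. -/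
theorem IsHomeoGraph.tendsto {C : Set (Hcube × Hcube)} (h : IsHomeoGraph C)
    {xs ys : ℕ → Hcube} {x y : Hcube} (hx : Filter.Tendsto xs Filter.atTop (nhds x))
    (hmem : ∀ n, (xs n, ys n) ∈ C) (hxy : (x, y) ∈ C) :
    Filter.Tendsto ys Filter.atTop (nhds y) := by
  obtain ⟨K, L, hK, hL, φ, rfl⟩ := h
  obtain ⟨k0, hk0⟩ := hxy
  have hk01 : (k0 : Hcube) = x := congrArg Prod.fst hk0
  have hk02 : (φ k0 : Hcube) = y := congrArg Prod.snd hk0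
  choose k hk using hmem
  have hks1 : ∀ n, (k n : Hcube) = xs n := fun n => congrArg Prod.fst (hk n)
  have hks2 : ∀ n, (φ (k n) : Hcube) = ys n := fun n => congrArg Prod.snd (hk n)
  have h1 : Filter.Tendsto k Filter.atTop (nhds k0) := by
    rw [tendsto_subtype_rng]
    simpa only [hks1, hk01] using hx
  have h2 : Filter.Tendsto (fun n => φ (k n)) Filter.atTop (nhds (φ k0)) :=
    (φ.continuous.tendsto k0).comp h1
  have h3 := (continuous_subtype_val.tendsto (φ k0)).comp h2
  simpa only [Function.comp_def, hks2, hk02] using h3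

/-- Uniform continuity of a homeomorphism graph. -/
theorem IsHomeoGraph.unifCont {C : Set (Hcube × Hcube)} (h : IsHomeoGraph C)
    (ε : ℝ) (hε : 0 < ε) : ∃ δ : ℚ, 0 < δ ∧ ∀ x u x' u' : Hcube,
      (x, u) ∈ C → (x', u') ∈ C → dist x x' ≤ (δ : ℝ) → dist u u' ≤ ε := by
  obtain ⟨K, L, hK, hL, φ, rfl⟩ := h
  haveI : CompactSpace K := isCompact_iff_compactSpace.mp hK
  have huc : UniformContinuous (fun k : K => φ k) :=
    CompactSpace.uniformContinuous_of_continuous φ.continuous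
  obtain ⟨δ₀, hδ₀, hδ⟩ := Metric.uniformContinuous_iff.mp huc ε hε
  obtain ⟨δ, hδ1, hδ2⟩ := exists_rat_btwn hδ₀
  refine ⟨δ, by exact_mod_cast hδ1, ?_⟩
  rintro x u x' u' ⟨k, hk⟩ ⟨k', hk'⟩ hdist
  obtain ⟨hk1, hk2⟩ := Prod.mk.injEq .. ▸ hk
  obtain ⟨hk1', hk2'⟩ := Prod.mk.injEq .. ▸ hk'
  have h1 : dist k k' < δ₀ := by
    rw [Subtype.dist_eq, hk1, hk1']
    exact lt_of_le_of_lt hdist hδ2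
  have h2 := hδ h1
  rw [Subtype.dist_eq, hk2, hk2'] at h2
  exact h2.le

/-- Uniform continuity of the inverse of a homeomorphism graph. -/
theorem IsHomeoGraph.unifCont' {C : Set (Hcube × Hcube)} (h : IsHomeoGraph C)
    (ε : ℝ) (hε : 0 < ε) : ∃ δ : ℚ, 0 < δ ∧ ∀ x u x' u' : Hcube,
      (x, u) ∈ C → (x', u') ∈ C → dist u u' ≤ (δ : ℝ) → dist x x' ≤ ε := by
  obtain ⟨K, L, hK, hL, φ, rfl⟩ := h
  haveI : CompactSpace L := isCompact_iff_compactSpace.mp hL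
  have huc : UniformContinuous (fun l : L => φ.symm l) :=
    CompactSpace.uniformContinuous_of_continuous φ.symm.continuous
  obtain ⟨δ₀, hδ₀, hδ⟩ := Metric.uniformContinuous_iff.mp huc ε hε
  obtain ⟨δ, hδ1, hδ2⟩ := exists_rat_btwn hδ₀
  refine ⟨δ, by exact_mod_cast hδ1, ?_⟩
  rintro x u x' u' ⟨k, hk⟩ ⟨k', hk'⟩ hdist
  obtain ⟨hk1, hk2⟩ := Prod.mk.injEq .. ▸ hk
  obtain ⟨hk1', hk2'⟩ := Prod.mk.injEq .. ▸ hk'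
  have h1 : dist (φ k) (φ k') < δ₀ := by
    rw [Subtype.dist_eq, hk2, hk2']
    exact lt_of_le_of_lt hdist hδ2
  have h2 := hδ h1
  rw [Subtype.dist_eq] at h2
  simp only [φ.symm_apply_apply] at h2
  rw [hk1, hk1'] at h2
  exact h2.le

section AmbitFacts

variable {G : Type} [Group G]

/-- Every point of the common domain has an image under every `λ_g`. -/
theorem AmbitCode.dom {p : (G → NonemptyCompacts (Hcube × Hcube)) × Hcube}
    (hp : AmbitCode G p) (g : G) {x : Hcube}
    (hx : x ∈ Prod.fst '' (p.1 1 : Set (Hcube × Hcube))) :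
    ∃ y, (x, y) ∈ (p.1 g : Set (Hcube × Hcube)) := by
  rw [← hp.2.2.1 g 1] at hx
  obtain ⟨w, hw, hw2⟩ := hx
  exact ⟨w.2, by rwa [show (x, w.2) = w from Prod.ext hw2.symm rfl]⟩

/-- Facts about the orbit map of an ambit code. -/
theorem AmbitCode.orbit {p : (G → NonemptyCompacts (Hcube × Hcube)) × Hcube}
    (hp : AmbitCode G p) : ∃ a : G → Hcube,
    (∀ g, (p.2, a g) ∈ (p.1 g : Set (Hcube × Hcube))) ∧ a 1 = p.2 ∧
    (∀ g, a g ∈ Prod.fst '' (p.1 1 : Set (Hcube × Hcube))) ∧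
    (∀ g y, (p.2, y) ∈ (p.1 g : Set (Hcube × Hcube)) → y = a g) ∧
    (∀ g h, (a h, a (g * h)) ∈ (p.1 g : Set (Hcube × Hcube))) ∧
    (Prod.fst '' (p.1 1 : Set (Hcube × Hcube)) ⊆ closure (Set.range a)) := by
  obtain ⟨hp1, hp2, hp3, hp4, hp5, hp6, hp7⟩ := hp
  have hp' : AmbitCode G p := ⟨hp1, hp2, hp3, hp4, hp5, hp6, hp7⟩
  choose a ha using fun g => hp'.dom g hp6
  have huniq : ∀ g y, (p.2, y) ∈ (p.1 g : Set (Hcube × Hcube)) → y = a g :=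
    fun g y hy => (hp1 g).eq_of_mem hy (ha g)
  have hmem : ∀ g, a g ∈ Prod.fst '' (p.1 1 : Set (Hcube × Hcube)) := by
    intro g
    rw [hp3 1 g, hp2 g]
    exact ⟨(p.2, a g), ha g, rfl⟩
  refine ⟨a, ha, (hp4 _ (ha 1)), hmem, huniq, ?_, ?_⟩
  · intro g h
    obtain ⟨z, hz⟩ := hp'.dom g (hmem h)
    have : (p.2, z) ∈ (p.1 (g * h) : Set (Hcube × Hcube)) := hp5 g h _ _ _ (ha h) hz
    rwa [huniq _ _ this] at hz
  · intro x hx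
    rw [Metric.mem_closure_iff]
    intro ε hε
    obtain ⟨ε', hε'0, hε'⟩ := exists_rat_btwn hε
    have hε'0' : (0 : ℚ) < ε' := by exact_mod_cast hε'0
    obtain ⟨g, y, hy, hdy⟩ := hp7 x hx ε' hε'0'
    rw [huniq _ _ hy] at hdy
    exact ⟨a g, ⟨g, rfl⟩, by rw [dist_comm]; exact hdy.trans hε'⟩

end AmbitFacts

/-- The basic closed condition: there are `y z` with `(α,y) ∈ λ_g`, `(α,z) ∈ λ_h` and
`dist y z ≤ a`. For an ambit code this says `dist (g·α) (h·α) ≤ a`. -/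
def Cset (G : Type) [Group G] (g h : G) (a : ℝ) :
    Set ((G → NonemptyCompacts (Hcube × Hcube)) × Hcube) :=
  {p | ∃ y z : Hcube, (p.2, y) ∈ (p.1 g : Set (Hcube × Hcube)) ∧
    (p.2, z) ∈ (p.1 h : Set (Hcube × Hcube)) ∧ dist y z ≤ a}

/-- The Borel condition equivalent to topological conjugacy: the map `g·α ↦ g·β` is
uniformly continuous in both directions. -/
def Phi (G : Type) [Group G] (p q : (G → NonemptyCompacts (Hcube × Hcube)) × Hcube) : Prop :=
  ∀ ε : ℚ, 0 < ε → ∃ δ : ℚ, 0 < δ ∧ ∀ g h : G,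
    (p ∈ Cset G g h δ → q ∈ Cset G g h ε) ∧ (q ∈ Cset G g h δ → p ∈ Cset G g h ε)

theorem isClosed_memSet :
    IsClosed {q : (Hcube × Hcube) × NonemptyCompacts (Hcube × Hcube) |
      q.1 ∈ (q.2 : Set (Hcube × Hcube))} := by
  have hcont : Continuous fun q : (Hcube × Hcube) × NonemptyCompacts (Hcube × Hcube) =>
      Metric.infDist q.1 (q.2 : Set (Hcube × Hcube)) := Metric.lipschitz_infDist.continuous
  have : {q : (Hcube × Hcube) × NonemptyCompacts (Hcube × Hcube) |
        q.1 ∈ (q.2 : Set (Hcube × Hcube))}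
      = (fun q : (Hcube × Hcube) × NonemptyCompacts (Hcube × Hcube) =>
          Metric.infDist q.1 (q.2 : Set (Hcube × Hcube)))⁻¹' {0} := by
    ext q
    simp only [Set.mem_setOf_eq, Set.mem_preimage, Set.mem_singleton_iff]
    exact q.2.isCompact.isClosed.mem_iff_infDist_zero q.2.nonempty
  rw [this]
  exact IsClosed.preimage hcont isClosed_singleton

theorem isClosed_Cset (G : Type) [Group G] (g h : G) (a : ℝ) : IsClosed (Cset G g h a) := by
  have key : Cset G g h a = Prod.fst ''
      {r : ((G → NonemptyCompacts (Hcube × Hcube)) × Hcube) × (Hcube × Hcube) |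
        (r.1.2, r.2.1) ∈ (r.1.1 g : Set (Hcube × Hcube)) ∧
        (r.1.2, r.2.2) ∈ (r.1.1 h : Set (Hcube × Hcube)) ∧ dist r.2.1 r.2.2 ≤ a} := by
    ext p
    constructor
    · rintro ⟨y, z, h1, h2, h3⟩; exact ⟨(p, (y, z)), ⟨h1, h2, h3⟩, rfl⟩
    · rintro ⟨⟨p', y, z⟩, ⟨h1, h2, h3⟩, rfl⟩; exact ⟨y, z, h1, h2, h3⟩
  rw [key]
  apply isClosedMap_fst_of_compactSpace
  have c1 : Continuous fun r :
      ((G → NonemptyCompacts (Hcube × Hcube)) × Hcube) × (Hcube × Hcube) =>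
      ((r.1.2, r.2.1), r.1.1 g) :=
    (((continuous_snd.comp continuous_fst).prodMk
      (continuous_fst.comp continuous_snd)).prodMk
      ((continuous_apply g).comp (continuous_fst.comp continuous_fst)))
  have c2 : Continuous fun r :
      ((G → NonemptyCompacts (Hcube × Hcube)) × Hcube) × (Hcube × Hcube) =>
      ((r.1.2, r.2.2), r.1.1 h) :=
    (((continuous_snd.comp continuous_fst).prodMk
      (continuous_snd.comp continuous_snd)).prodMk
      ((continuous_apply h).comp (continuous_fst.comp continuous_fst)))
  refine IsClosed.inter (isClosed_memSet.preimage c1)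
    (IsClosed.inter (isClosed_memSet.preimage c2) ?_)
  exact isClosed_le (continuous_dist.comp
    ((continuous_fst.comp continuous_snd).prodMk (continuous_snd.comp continuous_snd)))
    continuous_const

/-- The key equivalence: on ambit codes, topological conjugacy is equivalent to the
Borel condition `Phi`. -/
theorem codeConj_iff_phi {G : Type} [Group G]
    {p q : (G → NonemptyCompacts (Hcube × Hcube)) × Hcube}
    (hp : AmbitCode G p) (hq : AmbitCode G q) : CodeConj G p q ↔ Phi G p q := by
  obtain ⟨a, ha, ha1, hamem, hauniq, hacomp, hadense⟩ := hp.orbit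
  obtain ⟨b, hb, hb1, hbmem, hbuniq, hbcomp, hbdense⟩ := hq.orbit
  set X := Prod.fst '' (p.1 1 : Set (Hcube × Hcube)) with hXdef
  set Y := Prod.fst '' (q.1 1 : Set (Hcube × Hcube)) with hYdef
  have hXc : IsCompact X := (p.1 1).isCompact.image continuous_fst
  have hYc : IsCompact Y := (q.1 1).isCompact.image continuous_fst
  constructor
  · -- CodeConj → Phi
    rintro ⟨F, hF, hfst, hsnd, hαβ, hint⟩
    -- the graph of the conjugacy contains all (g·α, g·β)
    have hab : ∀ g : G, (a g, b g) ∈ F := by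
      intro g
      have : a g ∈ Prod.fst '' F := by rw [hfst]; exact hamem g
      obtain ⟨w, hw, hw1⟩ := this
      have hw' : (a g, w.2) ∈ F := by rwa [show (a g, w.2) = w from Prod.ext hw1.symm rfl]
      have : (q.2, w.2) ∈ (q.1 g : Set (Hcube × Hcube)) := hint g p.2 (a g) q.2 w.2 (ha g) hαβ hw'
      rwa [hbuniq g w.2 this] at hw'
    intro ε hε
    have hε' : (0 : ℝ) < (ε : ℝ) := by exact_mod_cast hε
    obtain ⟨δ₁, hδ₁0, hδ₁⟩ := hF.unifCont ε hε'
    obtain ⟨δ₂, hδ₂0, hδ₂⟩ := hF.unifCont' ε hε'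
    refine ⟨min δ₁ δ₂, lt_min hδ₁0 hδ₂0, fun g h => ⟨?_, ?_⟩⟩
    · rintro ⟨y, z, h1, h2, h3⟩
      rw [hauniq g y h1, hauniq h z h2] at h3
      have : dist (a g) (a h) ≤ (δ₁ : ℝ) :=
        h3.trans (by exact_mod_cast min_le_left δ₁ δ₂)
      exact ⟨b g, b h, hb g, hb h, hδ₁ _ _ _ _ (hab g) (hab h) this⟩
    · rintro ⟨y, z, h1, h2, h3⟩
      rw [hbuniq g y h1, hbuniq h z h2] at h3
      have : dist (b g) (b h) ≤ (δ₂ : ℝ) :=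
        h3.trans (by exact_mod_cast min_le_right δ₁ δ₂)
      exact ⟨a g, a h, ha g, ha h, hδ₂ _ _ _ _ (hab g) (hab h) this⟩
  · -- Phi → CodeConj
    intro hΦ
    set R : Set (Hcube × Hcube) := Set.range (fun g : G => (a g, b g)) with hRdef
    set F : Set (Hcube × Hcube) := closure R with hFdef
    have hRXY : R ⊆ X ×ˢ Y := by
      rintro _ ⟨g, rfl⟩
      exact ⟨hamem g, hbmem g⟩
    have hFXY : F ⊆ X ×ˢ Y :=
      closure_minimal hRXY (hXc.isClosed.prod hYc.isClosed)
    -- membership in F via sequences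
    have hFseq : ∀ w : Hcube × Hcube, w ∈ F →
        ∃ gs : ℕ → G, Filter.Tendsto (fun n => a (gs n)) Filter.atTop (nhds w.1) ∧
          Filter.Tendsto (fun n => b (gs n)) Filter.atTop (nhds w.2) := by
      intro w hw
      obtain ⟨s, hsR, hslim⟩ := mem_closure_iff_seq_limit.mp hw
      choose gs hgs using hsR
      have h1 : Filter.Tendsto (fun n => (s n).1) Filter.atTop (nhds w.1) :=
        (continuous_fst.tendsto w).comp hslim
      have h2 : Filter.Tendsto (fun n => (s n).2) Filter.atTop (nhds w.2) :=
        (continuous_snd.tendsto w).comp hslim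
      refine ⟨gs, ?_, ?_⟩
      · convert h1 using 2 with n
        rw [← hgs n]
      · convert h2 using 2 with n
        rw [← hgs n]
    -- the uniform-continuity modulus of F
    have hmod : ∀ ε : ℚ, 0 < ε → ∃ δ : ℚ, 0 < δ ∧ ∀ x u x' u' : Hcube,
        (x, u) ∈ F → (x', u') ∈ F →
        (dist x x' < (δ : ℝ) → dist u u' ≤ (ε : ℝ)) ∧
        (dist u u' < (δ : ℝ) → dist x x' ≤ (ε : ℝ)) := by
      intro ε hε
      obtain ⟨δ, hδ0, hδ⟩ := hΦ ε hε
      refine ⟨δ, hδ0, ?_⟩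
      intro x u x' u' hxu hx'u'
      obtain ⟨gs, hga, hgb⟩ := hFseq _ hxu
      obtain ⟨hs, hha, hhb⟩ := hFseq _ hx'u'
      constructor
      · intro hlt
        refine le_of_forall_pos_le_add ?_
        intro c hc
        have hev : ∀ᶠ n in Filter.atTop,
            dist (a (gs n)) x < ((δ : ℝ) - dist x x') / 2 ∧
            dist (a (hs n)) x' < ((δ : ℝ) - dist x x') / 2 ∧
            dist (b (gs n)) u < c / 2 ∧ dist (b (hs n)) u' < c / 2 := by
          have e1 := (Metric.tendsto_nhds.mp hga) (((δ : ℝ) - dist x x') / 2) (by linarith)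
          have e2 := (Metric.tendsto_nhds.mp hha) (((δ : ℝ) - dist x x') / 2) (by linarith)
          have e3 := (Metric.tendsto_nhds.mp hgb) (c / 2) (by linarith)
          have e4 := (Metric.tendsto_nhds.mp hhb) (c / 2) (by linarith)
          filter_upwards [e1, e2, e3, e4] with n f1 f2 f3 f4
          exact ⟨f1, f2, f3, f4⟩
        obtain ⟨n, f1, f2, f3, f4⟩ := hev.exists
        have hda : dist (a (gs n)) (a (hs n)) ≤ (δ : ℝ) := by
          have := dist_triangle4 (a (gs n)) x x' (a (hs n))
          rw [dist_comm (a (hs n)) x'] at f2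
          linarith
        have hcq : q ∈ Cset G (gs n) (hs n) ε :=
          (hδ (gs n) (hs n)).1 ⟨a (gs n), a (hs n), ha _, ha _, hda⟩
        obtain ⟨y, z, m1, m2, m3⟩ := hcq
        rw [hbuniq _ _ m1, hbuniq _ _ m2] at m3
        have := dist_triangle4 u (b (gs n)) (b (hs n)) u'
        rw [dist_comm u (b (gs n))] at this
        linarith
      · intro hlt
        refine le_of_forall_pos_le_add ?_
        intro c hc
        have hev : ∀ᶠ n in Filter.atTop,
            dist (b (gs n)) u < ((δ : ℝ) - dist u u') / 2 ∧
            dist (b (hs n)) u' < ((δ : ℝ) - dist u u') / 2 ∧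
            dist (a (gs n)) x < c / 2 ∧ dist (a (hs n)) x' < c / 2 := by
          have e1 := (Metric.tendsto_nhds.mp hgb) (((δ : ℝ) - dist u u') / 2) (by linarith)
          have e2 := (Metric.tendsto_nhds.mp hhb) (((δ : ℝ) - dist u u') / 2) (by linarith)
          have e3 := (Metric.tendsto_nhds.mp hga) (c / 2) (by linarith)
          have e4 := (Metric.tendsto_nhds.mp hha) (c / 2) (by linarith)
          filter_upwards [e1, e2, e3, e4] with n f1 f2 f3 f4
          exact ⟨f1, f2, f3, f4⟩
        obtain ⟨n, f1, f2, f3, f4⟩ := hev.exists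
        have hdb : dist (b (gs n)) (b (hs n)) ≤ (δ : ℝ) := by
          have := dist_triangle4 (b (gs n)) u u' (b (hs n))
          rw [dist_comm (b (hs n)) u'] at f2
          linarith
        have hcp : p ∈ Cset G (gs n) (hs n) ε :=
          (hδ (gs n) (hs n)).2 ⟨b (gs n), b (hs n), hb _, hb _, hdb⟩
        obtain ⟨y, z, m1, m2, m3⟩ := hcp
        rw [hauniq _ _ m1, hauniq _ _ m2] at m3
        have := dist_triangle4 x (a (gs n)) (a (hs n)) x'
        rw [dist_comm x (a (gs n))] at this
        linarith
    -- F is the graph of a function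
    have hwd : ∀ x u u' : Hcube, (x, u) ∈ F → (x, u') ∈ F → u = u' := by
      intro x u u' h1 h2
      rw [← dist_le_zero]
      by_contra hcon
      push_neg at hcon
      obtain ⟨ε, hε0, hε⟩ := exists_rat_btwn hcon
      have hε0' : (0 : ℚ) < ε := by exact_mod_cast hε0
      obtain ⟨δ, hδ0, hδ⟩ := hmod ε hε0'
      have : dist u u' ≤ (ε : ℝ) :=
        (hδ x u x u' h1 h2).1 (by rw [dist_self]; exact_mod_cast hδ0)
      linarith
    have hinj : ∀ x x' u : Hcube, (x, u) ∈ F → (x', u) ∈ F → x = x' := by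
      intro x x' u h1 h2
      rw [← dist_le_zero]
      by_contra hcon
      push_neg at hcon
      obtain ⟨ε, hε0, hε⟩ := exists_rat_btwn hcon
      have hε0' : (0 : ℚ) < ε := by exact_mod_cast hε0
      obtain ⟨δ, hδ0, hδ⟩ := hmod ε hε0'
      have : dist x x' ≤ (ε : ℝ) :=
        (hδ x u x' u h1 h2).2 (by rw [dist_self]; exact_mod_cast hδ0)
      linarith
    -- the projections of F
    have hfstF : Prod.fst '' F = X := by
      apply Set.Subset.antisymm
      · rintro _ ⟨w, hw, rfl⟩
        exact (hFXY hw).1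
      · intro x hx
        have hxcl : x ∈ closure (Set.range a) := hadense hx
        obtain ⟨s, hsR, hslim⟩ := mem_closure_iff_seq_limit.mp hxcl
        choose gs hgs using hsR
        have hFcomp : IsCompact F := (hXc.prod hYc).of_isClosed_subset isClosed_closure hFXY
        have hmemF : ∀ n, (a (gs n), b (gs n)) ∈ F :=
          fun n => subset_closure ⟨gs n, rfl⟩
        obtain ⟨w, hwF, ψ, hψ, hψlim⟩ := hFcomp.tendsto_subseq hmemF
        have h1 : Filter.Tendsto (fun n => a (gs (ψ n))) Filter.atTop (nhds w.1) := by
          have := (continuous_fst.tendsto w).comp hψlim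
          simpa [Function.comp_def] using this
        have h2 : Filter.Tendsto (fun n => a (gs (ψ n))) Filter.atTop (nhds x) := by
          have hsub : Filter.Tendsto (fun n => s (ψ n)) Filter.atTop (nhds x) :=
            hslim.comp hψ.tendsto_atTop
          convert hsub using 2 with n
          rw [← hgs (ψ n)]
        have : w.1 = x := tendsto_nhds_unique h1 h2
        exact ⟨w, hwF, this⟩
    have hsndF : Prod.snd '' F = Y := by
      apply Set.Subset.antisymm
      · rintro _ ⟨w, hw, rfl⟩
        exact (hFXY hw).2
      · intro y hy
        have hycl : y ∈ closure (Set.range b) := hbdense hy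
        obtain ⟨s, hsR, hslim⟩ := mem_closure_iff_seq_limit.mp hycl
        choose gs hgs using hsR
        have hFcomp : IsCompact F := (hXc.prod hYc).of_isClosed_subset isClosed_closure hFXY
        have hmemF : ∀ n, (a (gs n), b (gs n)) ∈ F :=
          fun n => subset_closure ⟨gs n, rfl⟩
        obtain ⟨w, hwF, ψ, hψ, hψlim⟩ := hFcomp.tendsto_subseq hmemF
        have h1 : Filter.Tendsto (fun n => b (gs (ψ n))) Filter.atTop (nhds w.2) := by
          have := (continuous_snd.tendsto w).comp hψlim
          simpa [Function.comp_def] using this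
        have h2 : Filter.Tendsto (fun n => b (gs (ψ n))) Filter.atTop (nhds y) := by
          have hsub : Filter.Tendsto (fun n => s (ψ n)) Filter.atTop (nhds y) :=
            hslim.comp hψ.tendsto_atTop
          convert hsub using 2 with n
          rw [← hgs (ψ n)]
        have : w.2 = y := tendsto_nhds_unique h1 h2
        exact ⟨w, hwF, this⟩
    -- the function underlying F
    have hfun : ∀ k : X, ∃ u : Hcube, (↑k, u) ∈ F ∧ u ∈ Y := by
      rintro ⟨x, hx⟩
      rw [← hfstF] at hx
      obtain ⟨w, hw, hw1⟩ := hx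
      have hw' : (x, w.2) ∈ F := by rwa [show (x, w.2) = w from Prod.ext hw1.symm rfl]
      exact ⟨w.2, hw', (hFXY hw').2⟩
    choose f hf1 hf2 using hfun
    have hbij : Function.Bijective (fun k : X => (⟨f k, hf2 k⟩ : Y)) := by
      constructor
      · intro k k' hkk'
        have : f k = f k' := congrArg Subtype.val hkk'
        exact Subtype.ext (hinj _ _ _ (hf1 k) (this ▸ hf1 k'))
      · rintro ⟨y, hy⟩
        rw [← hsndF] at hy
        obtain ⟨w, hw, hw2⟩ := hy
        have hw' : (w.1, y) ∈ F := by rwa [show (w.1, y) = w from Prod.ext rfl hw2.symm]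
        have hwX : w.1 ∈ X := (hFXY hw').1
        refine ⟨⟨w.1, hwX⟩, ?_⟩
        exact Subtype.ext (hwd _ _ _ (hf1 ⟨w.1, hwX⟩) hw')
    have hcontf : Continuous (fun k : X => (⟨f k, hf2 k⟩ : Y)) := by
      rw [Metric.continuous_iff]
      intro k ε hε
      obtain ⟨ε', hε'0, hε'⟩ := exists_rat_btwn hε
      have hε'0' : (0 : ℚ) < ε' := by exact_mod_cast hε'0
      obtain ⟨δ, hδ0, hδ⟩ := hmod ε' hε'0'
      refine ⟨δ, by exact_mod_cast hδ0, ?_⟩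
      intro k' hkk'
      rw [Subtype.dist_eq] at hkk' ⊢
      calc dist (f k') (f k) ≤ (ε' : ℝ) :=
            (hδ _ _ _ _ (hf1 k') (hf1 k)).1 hkk'
        _ < ε := hε'
    haveI : CompactSpace X := isCompact_iff_compactSpace.mp hXc
    let e : X ≃ Y := Equiv.ofBijective _ hbij
    let φ : X ≃ₜ Y := Continuous.homeoOfEquivCompactToT2 (f := e) hcontf
    have hgraph : F = Set.range fun k : X => ((k : Hcube), (φ k : Hcube)) := by
      apply Set.Subset.antisymm
      · rintro ⟨x, u⟩ hxu
        have hx : x ∈ X := (hFXY hxu).1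
        refine ⟨⟨x, hx⟩, ?_⟩
        have : f ⟨x, hx⟩ = u := hwd _ _ _ (hf1 ⟨x, hx⟩) hxu
        exact Prod.ext rfl this
      · rintro _ ⟨k, rfl⟩
        exact hf1 k
    refine ⟨F, ⟨X, Y, hXc, hYc, φ, hgraph⟩, hfstF, hsndF, ?_, ?_⟩
    · have : (a 1, b 1) ∈ F := subset_closure ⟨1, rfl⟩
      rwa [ha1, hb1] at this
    · -- intertwining
      intro g x y u v hxy hxu hyv
      obtain ⟨gs, hga, hgb⟩ := hFseq _ hxu
      have hacomp' : ∀ n, (a (gs n), a (g * gs n)) ∈ (p.1 g : Set (Hcube × Hcube)) :=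
        fun n => hacomp g (gs n)
      have hay : Filter.Tendsto (fun n => a (g * gs n)) Filter.atTop (nhds y) :=
        (hp.1 g).tendsto hga hacomp' hxy
      -- u has an image under λ_g^q
      have huY : u ∈ Prod.fst '' (q.1 g : Set (Hcube × Hcube)) := by
        rw [hq.2.2.1 g 1]
        exact (hFXY hxu).2
      obtain ⟨w, hw, hw1⟩ := huY
      have hw' : (u, w.2) ∈ (q.1 g : Set (Hcube × Hcube)) := by
        rwa [show (u, w.2) = w from Prod.ext hw1.symm rfl]
      have hbcomp' : ∀ n, (b (gs n), b (g * gs n)) ∈ (q.1 g : Set (Hcube × Hcube)) :=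
        fun n => hbcomp g (gs n)
      have hbw : Filter.Tendsto (fun n => b (g * gs n)) Filter.atTop (nhds w.2) :=
        (hq.1 g).tendsto hgb hbcomp' hw'
      have hyw : (y, w.2) ∈ F := by
        apply mem_closure_of_tendsto (hay.prodMk_nhds hbw)
        filter_upwards with n
        exact ⟨g * gs n, rfl⟩
      have : v = w.2 := hwd _ _ _ hyv hyw
      rwa [this]

theorem measurableSet_Cset (G : Type) [Group G] [Countable G] (g h : G) (a : ℝ) :
    MeasurableSet (Cset G g h a) :=
  (isClosed_Cset G g h a).measurableSet

/-- Main theorem: for a countable discrete group `G`, the topological conjugacy relation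
on the standard Borel space of compact metrizable `G`-ambits is Borel. -/
theorem codeConj_measurableSet
    (G : Type) [Group G] [Countable G] [MeasurableSpace G] [DiscreteMeasurableSpace G] :
    MeasurableSet {r : {p : (G → NonemptyCompacts (Hcube × Hcube)) × Hcube // AmbitCode G p} ×
        {p : (G → NonemptyCompacts (Hcube × Hcube)) × Hcube // AmbitCode G p} |
      CodeConj G r.1.val r.2.val} := by
  have hkey : {r : {p : (G → NonemptyCompacts (Hcube × Hcube)) × Hcube // AmbitCode G p} ×
        {p : (G → NonemptyCompacts (Hcube × Hcube)) × Hcube // AmbitCode G p} |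
      CodeConj G r.1.val r.2.val}
      = (fun r : {p : (G → NonemptyCompacts (Hcube × Hcube)) × Hcube // AmbitCode G p} ×
          {p : (G → NonemptyCompacts (Hcube × Hcube)) × Hcube // AmbitCode G p} =>
          (r.1.val, r.2.val)) ⁻¹'
        (⋂ (ε : ℚ) (_ : 0 < ε), ⋃ (δ : ℚ) (_ : 0 < δ), ⋂ (g : G) (h : G),
          ((Prod.fst ⁻¹' (Cset G g h (δ : ℝ)))ᶜ ∪ Prod.snd ⁻¹' (Cset G g h (ε : ℝ))) ∩
          ((Prod.snd ⁻¹' (Cset G g h (δ : ℝ)))ᶜ ∪ Prod.fst ⁻¹' (Cset G g h (ε : ℝ)))) := by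
    ext r
    simp only [Set.mem_setOf_eq, Set.mem_preimage, Set.mem_iInter, Set.mem_iUnion,
      Set.mem_inter_iff, Set.mem_union, Set.mem_compl_iff]
    rw [codeConj_iff_phi r.1.property r.2.property]
    unfold Phi
    constructor
    · intro hΦ ε hε
      obtain ⟨δ, hδ0, hδ⟩ := hΦ ε hε
      exact ⟨δ, hδ0, fun g h => ⟨or_iff_not_imp_left.mpr (fun hn => (hδ g h).1 (not_not.mp hn)),
        or_iff_not_imp_left.mpr (fun hn => (hδ g h).2 (not_not.mp hn))⟩⟩
    · intro hΦ ε hε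
      obtain ⟨δ, hδ0, hδ⟩ := hΦ ε hε
      refine ⟨δ, hδ0, fun g h => ⟨?_, ?_⟩⟩
      · intro hc
        rcases (hδ g h).1 with h1 | h1
        · exact absurd hc h1
        · exact h1
      · intro hc
        rcases (hδ g h).2 with h1 | h1
        · exact absurd hc h1
        · exact h1
  rw [hkey]
  have hmeas : Measurable (fun r : {p : (G → NonemptyCompacts (Hcube × Hcube)) × Hcube //
      AmbitCode G p} × {p : (G → NonemptyCompacts (Hcube × Hcube)) × Hcube // AmbitCode G p} =>
      (r.1.val, r.2.val)) :=
    (measurable_subtype_coe.comp measurable_fst).prodMk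
      (measurable_subtype_coe.comp measurable_snd)
  refine hmeas ?_
  refine MeasurableSet.iInter fun ε => MeasurableSet.iInter fun _ =>
    MeasurableSet.iUnion fun δ => MeasurableSet.iUnion fun _ =>
    MeasurableSet.iInter fun g => MeasurableSet.iInter fun h => ?_
  exact (((measurableSet_Cset G g h _).preimage measurable_fst).compl.union
      ((measurableSet_Cset G g h _).preimage measurable_snd)).inter
    (((measurableSet_Cset G g h _).preimage measurable_snd).compl.union
      ((measurableSet_Cset G g h _).preimage measurable_fst))
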